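/- Let G be an entropy-minimal finite simple graph with vertex set V. Then for every nonempty S ⊆ V, the bipartite subgraph of G induced between c(S) and S has no matching saturating S, where c(S) = {v ∈ V ∖ S : N(v) ⊆ S}. -/

import Mathlib

/-!
A matching `g` of `S` into `c(S)` gives `H(G) = |S| + H(G - (S ∪ g(S)))`, so a smaller graph has
the same fractional part of the entropy. This already holds for the maximal number of fixed points
at each alphabet size `q`, up to the factor `q ^ |S|`. Upwards, let `s` and `g s` copy each other,
which leaves the fixed points free on `S`. Downwards, a fixed point is determined by its values on
`S` and off `S ∪ g(S)`, because `g s` only sees `S`; once the values on `S` are fixed, the remaining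
vertices form a network on `G - (S ∪ g(S))`, since none of them is adjacent to a partner `g s`.
-/
noncomputable section

/-- `g : [q]^V → [q]` depends essentially on coordinate `u`: there exist two inputs that
differ only at coordinate `u` on which `g` takes different values. -/
def DependsEssentiallyOn {V : Type*} {q : ℕ} (g : (V → Fin q) → Fin q) (u : V) : Prop :=
  ∃ a b : V → Fin q, (∀ w, w ≠ u → a w = b w) ∧ g a ≠ g b

/-- The interaction graph of `f` is contained in the simple graph `G`
(viewed as the symmetric loopless digraph with arcs `(u,v)` and `(v,u)` for every edge `uv`). -/
def IGLe {V : Type*} {q : ℕ} (G : SimpleGraph V) (f : (V → Fin q) → (V → Fin q)) : Prop :=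
  ∀ u v : V, DependsEssentiallyOn (fun x => f x v) u → G.Adj u v

/-- The `q`-ary guessing number of a simple graph `G`: the maximum of `log_q |Fix(f)|`
over all `f` whose interaction graph is contained in `G`. -/
def guessing {V : Type*} (G : SimpleGraph V) (q : ℕ) : ℝ :=
  sSup {x : ℝ | ∃ f : (V → Fin q) → (V → Fin q),
    IGLe G f ∧ x = Real.logb q (Set.ncard {p : V → Fin q | f p = p})}

/-- The entropy of a simple graph: the supremum over `q ≥ 2` of its `q`-guessing numbers. -/
def graphEntropy {V : Type*} (G : SimpleGraph V) : ℝ :=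
  sSup {x : ℝ | ∃ q : ℕ, 2 ≤ q ∧ x = guessing G q}

/-- The set of all entropies of finite simple graphs. -/
def entropySet : Set ℝ := {x : ℝ | ∃ (n : ℕ) (G : SimpleGraph (Fin n)), graphEntropy G = x}

/-- A finite simple graph is entropy-minimal if no simple graph with fewer vertices has the same
fractional part of the entropy. -/
def EntropyMinimal {n : ℕ} (G : SimpleGraph (Fin n)) : Prop :=
  ∀ m : ℕ, m < n → ∀ G' : SimpleGraph (Fin m),
    Int.fract (graphEntropy G') ≠ Int.fract (graphEntropy G)


/-- `c(S)`: the vertices outside `S` all of whose neighbours lie in `S`. -/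
def cSet {V : Type*} (G : SimpleGraph V) (S : Set V) : Set V :=
  {v | v ∉ S ∧ ∀ w, G.Adj v w → w ∈ S}

/-- The bipartite subgraph of `G` induced between `C` and `S` has a matching saturating `S`:
each vertex of `S` is matched to a distinct neighbour in `C`. -/
def HasSaturatingMatching {V : Type*} (G : SimpleGraph V) (C S : Set V) : Prop :=
  ∃ g : V → V, (∀ s ∈ S, g s ∈ C ∧ G.Adj (g s) s) ∧ Set.InjOn g S

open Function Set

section Dependence

variable {V W : Type*} {q : ℕ}

theorem DependsEssentiallyOn.apply_eq [Finite V] {g : (V → Fin q) → Fin q} {x y : V → Fin q}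
    (h : ∀ u, DependsEssentiallyOn g u → x u = y u) : g x = g y := by
  classical
  have := Fintype.ofFinite V
  -- Move `x` to `y` one coordinate at a time; each step changes a coordinate `g` ignores.
  suffices key : ∀ D : Finset V, ∀ x : V → Fin q, (∀ u ∉ D, x u = y u) →
      (∀ u, DependsEssentiallyOn g u → x u = y u) → g x = g y from
    key Finset.univ x (by simp) h
  intro D
  induction D using Finset.induction_on with
  | empty => exact fun x hx _ => congrArg g (funext fun u => hx u (Finset.notMem_empty u))
  | insert u D _ ih =>
    intro x hx hdep
    have hstep : g x = g (update x u (y u)) := by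
      by_contra hne
      have hu := hdep u ⟨x, _, fun w hw => (update_of_ne hw _ _).symm, hne⟩
      exact hne (by rw [← hu, update_eq_self])
    rw [hstep]
    apply ih <;> intro w hw <;> rcases eq_or_ne w u with rfl | hwu
    · simp
    · simpa [update_of_ne hwu, hwu, hw] using hx w
    · simp
    · simpa [update_of_ne hwu] using hdep w hw

theorem IGLe.apply_eq_of_forall_adj [Finite V] {G : SimpleGraph V}
    {f : (V → Fin q) → (V → Fin q)} (hf : IGLe G f) {v : V} {x y : V → Fin q}
    (h : ∀ u, G.Adj u v → x u = y u) : f x v = f y v :=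
  DependsEssentiallyOn.apply_eq fun u hu => h u (hf u v hu)

theorem DependsEssentiallyOn.eq_of_eval {u w : V}
    (h : DependsEssentiallyOn (fun x : V → Fin q => x w) u) : u = w := by
  obtain ⟨a, b, hab, hne⟩ := h
  by_contra huw
  exact hne (hab w (Ne.symm huw))

theorem DependsEssentiallyOn.exists_of_comp {ι : W → V} (hι : Injective ι)
    {h : (W → Fin q) → Fin q} {u : V} (hd : DependsEssentiallyOn (fun x => h (x ∘ ι)) u) :
    ∃ w, ι w = u ∧ DependsEssentiallyOn h w := by
  obtain ⟨a, b, hab, hne⟩ := hd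
  by_cases hu : u ∈ range ι
  · obtain ⟨w, rfl⟩ := hu
    exact ⟨w, rfl, a ∘ ι, b ∘ ι, fun w' hw' => hab _ (hι.ne hw'), hne⟩
  · refine absurd (congrArg h (funext fun w => hab (ι w) ?_)) hne
    rintro rfl
    exact hu ⟨w, rfl⟩

theorem DependsEssentiallyOn.of_extend {ι : W → V} (hι : Injective ι)
    {h : (V → Fin q) → Fin q} {d : V → Fin q} {i : W}
    (hd : DependsEssentiallyOn (fun y => h (extend ι y d)) i) : DependsEssentiallyOn h (ι i) := by
  obtain ⟨a, b, hab, hne⟩ := hd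
  refine ⟨extend ι a d, extend ι b d, fun v hv => ?_, hne⟩
  by_cases hv' : ∃ j, ι j = v
  · obtain ⟨j, rfl⟩ := hv'
    rw [hι.extend_apply, hι.extend_apply, hab j fun hji => hv (hji ▸ rfl)]
  · rw [extend_apply' _ _ _ hv', extend_apply' _ _ _ hv']

end Dependence

section FixedPointCounts

variable {V : Type*} {q : ℕ} {G : SimpleGraph V}

def fixedPointCounts (G : SimpleGraph V) (q : ℕ) : Set ℕ :=
  {N | ∃ f : (V → Fin q) → (V → Fin q), IGLe G f ∧ N = {p | f p = p}.ncard}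

def maxFixedPoints (G : SimpleGraph V) (q : ℕ) : ℕ := sSup (fixedPointCounts G q)

theorem one_mem_fixedPointCounts [NeZero q] (G : SimpleGraph V) : 1 ∈ fixedPointCounts G q := by
  refine ⟨fun _ _ => 0, fun _ _ ⟨_, _, _, hne⟩ => (hne rfl).elim, ?_⟩
  simp [eq_comm (a := fun _ : V => (0 : Fin q))]

theorem fixedPointCounts_bddAbove [Finite V] (G : SimpleGraph V) (q : ℕ) :
    BddAbove (fixedPointCounts G q) := by
  refine ⟨q ^ Nat.card V, ?_⟩
  rintro _ ⟨f, -, rfl⟩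
  simpa [Nat.card_fun] using Set.ncard_le_card {p | f p = p}

theorem ncard_fixedPoints_le_maxFixedPoints [Finite V] {f : (V → Fin q) → (V → Fin q)}
    (hf : IGLe G f) : {p | f p = p}.ncard ≤ maxFixedPoints G q :=
  le_csSup (fixedPointCounts_bddAbove G q) ⟨f, hf, rfl⟩

theorem exists_ncard_fixedPoints_eq_maxFixedPoints [Finite V] [NeZero q] (G : SimpleGraph V) :
    ∃ f : (V → Fin q) → (V → Fin q), IGLe G f ∧ {p | f p = p}.ncard = maxFixedPoints G q := by
  obtain ⟨f, hf, hN⟩ := Nat.sSup_mem ⟨1, one_mem_fixedPointCounts G⟩ (fixedPointCounts_bddAbove G q)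
  exact ⟨f, hf, hN.symm⟩

theorem maxFixedPoints_pos [Finite V] [NeZero q] (G : SimpleGraph V) : 0 < maxFixedPoints G q :=
  le_csSup (fixedPointCounts_bddAbove G q) (one_mem_fixedPointCounts G)

theorem maxFixedPoints_le [Finite V] [NeZero q] (G : SimpleGraph V) :
    maxFixedPoints G q ≤ q ^ Nat.card V := by
  obtain ⟨f, -, hf⟩ := exists_ncard_fixedPoints_eq_maxFixedPoints (q := q) G
  simpa [← hf, Nat.card_fun] using Set.ncard_le_card {p | f p = p}

theorem guessing_eq_logb_maxFixedPoints [Finite V] (hq : 1 < q) (G : SimpleGraph V) :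
    guessing G q = Real.logb q (maxFixedPoints G q) := by
  have : NeZero q := ⟨by omega⟩
  have hq' : (1 : ℝ) < q := by exact_mod_cast hq
  refine IsGreatest.csSup_eq ⟨?_, ?_⟩
  · obtain ⟨f, hf, hmax⟩ := exists_ncard_fixedPoints_eq_maxFixedPoints (q := q) G
    exact ⟨f, hf, by rw [hmax]⟩
  · rintro _ ⟨f, hf, rfl⟩
    rcases Nat.eq_zero_or_pos {p | f p = p}.ncard with h0 | hpos
    · rw [h0, Nat.cast_zero, Real.logb_zero]
      exact Real.logb_nonneg hq' (by exact_mod_cast maxFixedPoints_pos G)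
    · exact Real.logb_le_logb_of_le hq' (by exact_mod_cast hpos)
        (by exact_mod_cast ncard_fixedPoints_le_maxFixedPoints hf)

theorem guessing_le_card [Finite V] (hq : 1 < q) (G : SimpleGraph V) :
    guessing G q ≤ Nat.card V := by
  have : NeZero q := ⟨by omega⟩
  have hq' : (1 : ℝ) < q := by exact_mod_cast hq
  rw [guessing_eq_logb_maxFixedPoints hq,
    Real.logb_le_iff_le_rpow hq' (by exact_mod_cast maxFixedPoints_pos G), Real.rpow_natCast]
  exact_mod_cast maxFixedPoints_le G

end FixedPointCounts

section Matching

variable {V W : Type*} {q : ℕ} {G : SimpleGraph V} {S : Set V} {g : V → V} {ι : W → V}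

/-- `g` matches `S` into `c(S)` and `ι` enumerates the vertices left unmatched. -/
structure MatchedComplement (G : SimpleGraph V) (S : Set V) (g : V → V) (ι : W → V) : Prop where
  matching : ∀ s ∈ S, g s ∈ cSet G S ∧ G.Adj (g s) s
  injOn : InjOn g S
  injective : Injective ι
  range_eq : range ι = (S ∪ g '' S)ᶜ

open Classical in
/-- The endpoint in `S` of the matching edge at `v` (and `v` itself off the matching). -/
def matchRep (S : Set V) (g : V → V) (v : V) : V :=
  if h : ∃ s ∈ S, g s = v then h.choose else v

open Classical in
def matchPartner (S : Set V) (g : V → V) (v : V) : V :=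
  if v ∈ S then g v else matchRep S g v

theorem matchPartner_of_mem {s : V} (hs : s ∈ S) : matchPartner S g s = g s :=
  if_pos hs

def matchingMap (ι : W → V) (S : Set V) (g : V → V) (f' : (W → Fin q) → (W → Fin q))
    (x : V → Fin q) : V → Fin q :=
  extend ι (f' (x ∘ ι)) (x ∘ matchPartner S g)

namespace MatchedComplement

theorem apply_notMem (h : MatchedComplement G S g ι) {s : V} (hs : s ∈ S) : g s ∉ S :=
  (h.matching s hs).1.1

theorem mem_of_adj_apply (h : MatchedComplement G S g ι) {s v : V} (hs : s ∈ S)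
    (hadj : G.Adj (g s) v) : v ∈ S :=
  (h.matching s hs).1.2 v hadj

theorem notMem_range_iff (h : MatchedComplement G S g ι) {v : V} :
    v ∉ range ι ↔ v ∈ S ∪ g '' S := by
  rw [h.range_eq, mem_compl_iff, not_not]

theorem notMem_of_mem_range (h : MatchedComplement G S g ι) {v : V} (hv : v ∈ range ι) :
    v ∉ S :=
  fun hs => h.notMem_range_iff.2 (Or.inl hs) hv

theorem matchRep_of_mem (h : MatchedComplement G S g ι) {s : V} (hs : s ∈ S) :
    matchRep S g s = s :=
  dif_neg fun ⟨_, hs', hgs'⟩ => h.apply_notMem hs' (hgs' ▸ hs)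

theorem matchRep_apply (h : MatchedComplement G S g ι) {s : V} (hs : s ∈ S) :
    matchRep S g (g s) = s := by
  have hex : ∃ s' ∈ S, g s' = g s := ⟨s, hs, rfl⟩
  rw [matchRep, dif_pos hex]
  exact h.injOn hex.choose_spec.1 hs hex.choose_spec.2

theorem matchPartner_apply (h : MatchedComplement G S g ι) {s : V} (hs : s ∈ S) :
    matchPartner S g (g s) = s := by
  rw [matchPartner, if_neg (h.apply_notMem hs), h.matchRep_apply hs]

theorem adj_matchPartner (h : MatchedComplement G S g ι) {v : V} (hv : v ∉ range ι) :
    G.Adj (matchPartner S g v) v := by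
  rcases h.notMem_range_iff.1 hv with hs | ⟨s, hs, rfl⟩
  · rw [matchPartner_of_mem hs]
    exact (h.matching v hs).2
  · rw [h.matchPartner_apply hs]
    exact (h.matching s hs).2.symm

theorem matchPartner_notMem_range (h : MatchedComplement G S g ι) {v : V} (hv : v ∉ range ι) :
    matchPartner S g v ∉ range ι := by
  rw [h.notMem_range_iff] at hv ⊢
  rcases hv with hs | ⟨s, hs, rfl⟩
  · exact Or.inr ⟨v, hs, (matchPartner_of_mem hs).symm⟩
  · exact Or.inl (by rwa [h.matchPartner_apply hs])

theorem matchRep_matchPartner (h : MatchedComplement G S g ι) {v : V} (hv : v ∉ range ι) :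
    matchRep S g (matchPartner S g v) = matchRep S g v := by
  rcases h.notMem_range_iff.1 hv with hs | ⟨s, hs, rfl⟩
  · rw [matchPartner_of_mem hs, h.matchRep_apply hs, h.matchRep_of_mem hs]
  · rw [h.matchPartner_apply hs, h.matchRep_apply hs, h.matchRep_of_mem hs]

theorem eq_of_fixed [Finite V] (h : MatchedComplement G S g ι) {f : (V → Fin q) → (V → Fin q)}
    (hf : IGLe G f) {x x' : V → Fin q} (hx : f x = x) (hx' : f x' = x')
    (hS : ∀ s ∈ S, x s = x' s) (hι : x ∘ ι = x' ∘ ι) : x = x' := by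
  funext v
  by_cases hv : v ∈ range ι
  · obtain ⟨w, rfl⟩ := hv
    exact congrFun hι w
  · rcases h.notMem_range_iff.1 hv with hs | ⟨s, hs, rfl⟩
    · exact hS v hs
    · rw [← hx, ← hx']
      exact hf.apply_eq_of_forall_adj fun u hu => hS u (h.mem_of_adj_apply hs hu.symm)

theorem igLe_matchingMap (h : MatchedComplement G S g ι)
    {f' : (W → Fin q) → (W → Fin q)} (hf' : IGLe (G.comap ι) f') :
    IGLe G (matchingMap ι S g f') := by
  intro u v hdep
  by_cases hv : v ∈ range ι
  · obtain ⟨w, rfl⟩ := hv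
    simp only [matchingMap, h.injective.extend_apply] at hdep
    obtain ⟨w', rfl, hdep'⟩ := hdep.exists_of_comp (h := fun y => f' y w) h.injective
    exact SimpleGraph.comap_adj.1 (hf' w' w hdep')
  · simp only [matchingMap, extend_apply' _ _ _ hv, comp_apply] at hdep
    rw [hdep.eq_of_eval]
    exact h.adj_matchPartner hv

end MatchedComplement

variable [NeZero q]

/-- The assignment equal to `z` on `S` and on its matched partners and to `y` along `ι`. -/
def matchingExtend (ι : W → V) (S : Set V) (g : V → V) (z : S → Fin q) (y : W → Fin q) :
    V → Fin q :=
  extend ι y fun v => extend Subtype.val z 0 (matchRep S g v)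

def matchingRestrict (ι : W → V) (S : Set V) (g : V → V) (f : (V → Fin q) → (V → Fin q))
    (z : S → Fin q) (y : W → Fin q) : W → Fin q :=
  f (matchingExtend ι S g z y) ∘ ι

theorem matchingExtend_comp (hι : Injective ι) (z : S → Fin q) (y : W → Fin q) :
    matchingExtend ι S g z y ∘ ι = y :=
  extend_comp hι _ _

theorem matchingExtend_of_notMem_range (z : S → Fin q) (y : W → Fin q) {v : V}
    (hv : v ∉ range ι) : matchingExtend ι S g z y v = extend Subtype.val z 0 (matchRep S g v) :=
  extend_apply' _ _ _ hv

theorem igLe_matchingRestrict (hι : Injective ι) {f : (V → Fin q) → (V → Fin q)} (hf : IGLe G f)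
    (z : S → Fin q) : IGLe (G.comap ι) (matchingRestrict ι S g f z) :=
  fun _ _ hdep => SimpleGraph.comap_adj.2 (hf _ _ (DependsEssentiallyOn.of_extend hι hdep))

namespace MatchedComplement

theorem matchingExtend_of_mem (h : MatchedComplement G S g ι) (z : S → Fin q) (y : W → Fin q)
    {s : V} (hs : s ∈ S) : matchingExtend ι S g z y s = z ⟨s, hs⟩ := by
  rw [matchingExtend, extend_apply' _ _ _ (h.notMem_range_iff.2 (Or.inl hs)), h.matchRep_of_mem hs]
  exact Subtype.val_injective.extend_apply z 0 ⟨s, hs⟩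

theorem injective_matchingExtend (h : MatchedComplement G S g ι) :
    Injective fun p : (S → Fin q) × (W → Fin q) => matchingExtend ι S g p.1 p.2 := by
  rintro ⟨z, y⟩ ⟨z', y'⟩ hzy
  simp only at hzy
  refine Prod.ext (funext fun s => ?_) ?_
  · simpa only [h.matchingExtend_of_mem _ _ s.2] using congrFun hzy s
  · rw [← matchingExtend_comp h.injective z y, hzy, matchingExtend_comp h.injective]

theorem matchingMap_matchingExtend (h : MatchedComplement G S g ι)
    {f' : (W → Fin q) → (W → Fin q)} {y : W → Fin q} (hy : f' y = y) (z : S → Fin q) :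
    matchingMap ι S g f' (matchingExtend ι S g z y) = matchingExtend ι S g z y := by
  rw [matchingMap, matchingExtend_comp h.injective, hy]
  funext v
  by_cases hv : v ∈ range ι
  · obtain ⟨w, rfl⟩ := hv
    rw [h.injective.extend_apply, matchingExtend, h.injective.extend_apply]
  · rw [extend_apply' _ _ _ hv, comp_apply, matchingExtend_of_notMem_range _ _ hv,
      matchingExtend_of_notMem_range _ _ (h.matchPartner_notMem_range hv),
      h.matchRep_matchPartner hv]

theorem pow_mul_ncard_fixedPoints_le [Finite V] (h : MatchedComplement G S g ι)
    (f' : (W → Fin q) → (W → Fin q)) :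
    q ^ S.ncard * {y | f' y = y}.ncard ≤ {x | matchingMap ι S g f' x = x}.ncard := by
  let e (p : (S → Fin q) × {y | f' y = y}) : {x | matchingMap ι S g f' x = x} :=
    ⟨matchingExtend ι S g p.1 p.2, h.matchingMap_matchingExtend p.2.2 p.1⟩
  have he : Injective e := by
    rintro ⟨z, y, hy⟩ ⟨z', y', hy'⟩ hzy
    obtain ⟨rfl, rfl⟩ := Prod.mk.inj (h.injective_matchingExtend (congrArg Subtype.val hzy))
    rfl
  calc q ^ S.ncard * {y | f' y = y}.ncard = Nat.card ((S → Fin q) × {y | f' y = y}) := by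
        rw [Nat.card_prod, Nat.card_fun, Nat.card_coe_set_eq, Nat.card_coe_set_eq, Nat.card_fin]
    _ ≤ {x | matchingMap ι S g f' x = x}.ncard :=
        (Nat.card_le_card_of_injective e he).trans_eq (Nat.card_coe_set_eq _)

theorem matchingRestrict_comp [Finite V] (h : MatchedComplement G S g ι)
    {f : (V → Fin q) → (V → Fin q)} (hf : IGLe G f) {x : V → Fin q} (hx : f x = x)
    {z : S → Fin q} (hxz : ∀ s : S, x s = z s) : matchingRestrict ι S g f z (x ∘ ι) = x ∘ ι := by
  funext j
  conv_rhs => rw [comp_apply, ← hx]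
  refine hf.apply_eq_of_forall_adj fun u hu => ?_
  by_cases hu' : u ∈ range ι
  · obtain ⟨w, rfl⟩ := hu'
    exact congrFun (matchingExtend_comp h.injective _ _) w
  · rcases h.notMem_range_iff.1 hu' with hs | ⟨s, hs, rfl⟩
    · rw [h.matchingExtend_of_mem _ _ hs, hxz ⟨u, hs⟩]
    · exact absurd (h.mem_of_adj_apply hs hu) (h.notMem_of_mem_range ⟨j, rfl⟩)

theorem ncard_fixedPoints_le [Finite V] (h : MatchedComplement G S g ι)
    {f : (V → Fin q) → (V → Fin q)} (hf : IGLe G f) {M : ℕ}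
    (hM : ∀ f' : (W → Fin q) → (W → Fin q), IGLe (G.comap ι) f' → {y | f' y = y}.ncard ≤ M) :
    {x | f x = x}.ncard ≤ q ^ S.ncard * M := by
  classical
  have := Fintype.ofFinite V
  have : Finite W := .of_injective ι h.injective
  rw [Set.ncard_eq_toFinset_card', mul_comm]
  -- Pigeonhole over the values on `S`; each fibre embeds into the fixed points of a restriction.
  calc {x | f x = x}.toFinset.card ≤ M * (Finset.univ : Finset (S → Fin q)).card := by
        refine Finset.card_le_mul_card_image_of_maps_to (f := fun x (s : S) => x s)
          (fun _ _ => Finset.mem_univ _) M fun z _ => ?_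
        rw [← Set.ncard_coe_finset]
        refine (ncard_le_ncard_of_injOn (t := {y | matchingRestrict ι S g f z y = y}) (· ∘ ι)
          (fun x hx => ?_) (fun x hx x' hx' hxx' => ?_)).trans
          (hM _ (igLe_matchingRestrict h.injective hf z))
        · simp only [Finset.coe_filter, Set.mem_toFinset] at hx
          exact h.matchingRestrict_comp hf hx.1 fun s => congrFun hx.2 s
        · simp only [Finset.coe_filter, Set.mem_toFinset] at hx hx'
          refine h.eq_of_fixed hf hx.1 hx'.1 (fun s hs => ?_) hxx'
          exact (congrFun hx.2 ⟨s, hs⟩).trans (congrFun hx'.2 ⟨s, hs⟩).symm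
    _ = M * q ^ S.ncard := by
        rw [Finset.card_univ, Fintype.card_fun, Fintype.card_fin, ← Nat.card_eq_fintype_card,
          Nat.card_coe_set_eq]

theorem maxFixedPoints_eq [Finite V] (h : MatchedComplement G S g ι) :
    maxFixedPoints G q = q ^ S.ncard * maxFixedPoints (G.comap ι) q := by
  have : Finite W := .of_injective ι h.injective
  refine le_antisymm (csSup_le ⟨1, one_mem_fixedPointCounts G⟩ ?_) ?_
  · rintro _ ⟨f, hf, rfl⟩
    exact h.ncard_fixedPoints_le hf fun f' hf' => ncard_fixedPoints_le_maxFixedPoints hf'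
  · obtain ⟨f', hf', hmax⟩ := exists_ncard_fixedPoints_eq_maxFixedPoints (q := q) (G.comap ι)
    rw [← hmax]
    exact (h.pow_mul_ncard_fixedPoints_le f').trans
      (ncard_fixedPoints_le_maxFixedPoints (h.igLe_matchingMap hf'))

end MatchedComplement

end Matching

theorem MatchedComplement.guessing_eq_add {V W : Type*} [Finite V] {q : ℕ} {G : SimpleGraph V}
    {S : Set V} {g : V → V} {ι : W → V} (h : MatchedComplement G S g ι) (hq : 1 < q) :
    guessing G q = S.ncard + guessing (G.comap ι) q := by
  have : NeZero q := ⟨by omega⟩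
  have : Finite W := .of_injective ι h.injective
  rw [guessing_eq_logb_maxFixedPoints hq, guessing_eq_logb_maxFixedPoints hq, h.maxFixedPoints_eq,
    Nat.cast_mul, Nat.cast_pow, Real.logb_mul (by positivity)
      (by exact_mod_cast (maxFixedPoints_pos _).ne'),
    Real.logb_pow, Real.logb_self_eq_one (by exact_mod_cast hq), mul_one]

theorem graphEntropy_eq_add_of_guessing_eq_add {V W : Type*} [Finite W] {G : SimpleGraph V}
    {G' : SimpleGraph W} {c : ℝ} (h : ∀ q, 1 < q → guessing G q = c + guessing G' q) :
    graphEntropy G = c + graphEntropy G' := by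
  have hset : {x | ∃ q, 2 ≤ q ∧ x = guessing G q} =
      OrderIso.addLeft c '' {x | ∃ q, 2 ≤ q ∧ x = guessing G' q} := by
    ext x
    constructor
    · rintro ⟨q, hq, rfl⟩
      exact ⟨_, ⟨q, hq, rfl⟩, (h q hq).symm⟩
    · rintro ⟨_, ⟨q, hq, rfl⟩, rfl⟩
      exact ⟨q, hq, (h q hq).symm⟩
  have hbdd : BddAbove {x | ∃ q, 2 ≤ q ∧ x = guessing G' q} := by
    refine ⟨Nat.card W, ?_⟩
    rintro _ ⟨q, hq, rfl⟩
    exact guessing_le_card hq G'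
  have hne : {x | ∃ q, 2 ≤ q ∧ x = guessing G' q}.Nonempty := ⟨_, 2, le_rfl, rfl⟩
  rw [graphEntropy, graphEntropy, hset, ← (OrderIso.addLeft c).map_csSup' hne hbdd]
  rfl

/-- If `G` is entropy-minimal, then for every nonempty `S`, the bipartite subgraph of `G`
between `c(S)` and `S` has no matching saturating `S`. -/
theorem entropyMinimal_no_saturating_matching {n : ℕ} (G : SimpleGraph (Fin n))
    (hmin : EntropyMinimal G) (S : Set (Fin n)) (hS : S.Nonempty) :
    ¬ HasSaturatingMatching G (cSet G S) S := by
  rintro ⟨g, hg, hginj⟩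
  set R := (S ∪ g '' S)ᶜ
  let ι : Fin (Nat.card R) → Fin n := Subtype.val ∘ (Finite.equivFin R).symm
  have hM : MatchedComplement G S g ι :=
    ⟨hg, hginj, Subtype.val_injective.comp (Equiv.injective _),
      by rw [(Equiv.surjective _).range_comp, Subtype.range_coe]⟩
  obtain ⟨s, hs⟩ := hS
  have hlt : Nat.card R < n := by
    simpa using Finite.card_subtype_lt (p := (· ∈ R)) (x := s) (by simp [R, hs])
  refine hmin _ hlt (G.comap ι) ?_
  rw [graphEntropy_eq_add_of_guessing_eq_add fun q hq => hM.guessing_eq_add hq,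
    Int.fract_natCast_add]

end
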